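/- Let n ≥ 2 and let V be a nonzero finite-dimensional complex vector space carrying an irreducible representation ρ of the symmetric group S_n. If the restriction of ρ to the subgroup S_{n-2} (permutations fixing the last two points) is irreducible, then either ρ(g) is the identity map of V for every g ∈ S_n (so ρ is the trivial representation), or ρ(g) equals sign(g) times the identity map of V for every g ∈ S_n (so ρ is the sign representation). -/

import Mathlib

/-- The subgroup of `Equiv.Perm (Fin n)` consisting of permutations fixing every
point with (0-based) index `≥ k`, i.e. the copy of `S_k` inside `S_n`. -/
def permFixFrom (n k : ℕ) : Subgroup (Equiv.Perm (Fin n)) where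
  carrier := {σ | ∀ i : Fin n, k ≤ (i : ℕ) → σ i = i}
  one_mem' := fun _ _ => rfl
  mul_mem' := by
    intro a b ha hb i hi
    have hb' := hb i hi
    have ha' := ha i hi
    simp only [Set.mem_setOf_eq] at *
    rw [Equiv.Perm.mul_apply, hb', ha']
  inv_mem' := by
    intro a ha i hi
    have h := ha i hi
    exact a.injective (by rw [← Equiv.Perm.mul_apply, mul_inv_cancel, Equiv.Perm.one_apply, h])

/-- A representation `ρ : G →* (V →ₗ[ℂ] V)` is irreducible if `V` is nonzero and the only
`G`-invariant subspaces are `⊥` and `⊤`. -/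
def IsIrreducibleRep {G V : Type*} [Group G] [AddCommGroup V] [Module ℂ V]
    (ρ : G →* (V →ₗ[ℂ] V)) : Prop :=
  Nontrivial V ∧ ∀ p : Submodule ℂ V, (∀ g : G, ∀ v ∈ p, ρ g v ∈ p) → p = ⊥ ∨ p = ⊤

/-!
The transposition `τ = (n-1 n)` commutes with `S_{n-2}`, so by Schur's lemma applied to the
irreducible restriction, `ρ τ` is a scalar `c`, and `c² = 1` since `τ² = 1`. All transpositions
are conjugate to `τ`, so each acts by the same scalar `c = ±1`; since transpositions generate
`S_n`, `ρ` is the trivial representation when `c = 1` and the sign representation when `c = -1`.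
-/

section Scalars

variable {G V : Type*} [Group G] [AddCommGroup V] [Module ℂ V] {ρ : G →* Module.End ℂ V}

theorem IsIrreducibleRep.exists_eq_smul_one_of_mem_centralizer [FiniteDimensional ℂ V]
    {H : Subgroup G} (hH : IsIrreducibleRep (ρ.comp H.subtype)) {t : G}
    (ht : t ∈ Subgroup.centralizer (H : Set G)) : ∃ c : ℂ, ρ t = c • 1 := by
  have := hH.1
  obtain ⟨c, hc⟩ := Module.End.exists_eigenvalue (ρ t)
  refine ⟨c, ?_⟩
  have hinv : ∀ h : H, ∀ v ∈ (ρ t).eigenspace c, ρ h v ∈ (ρ t).eigenspace c := by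
    rintro ⟨h, hh⟩ v hv
    rw [Module.End.mem_eigenspace_iff] at hv ⊢
    rw [← Module.End.mul_apply, ← map_mul, ← Subgroup.mem_centralizer_iff.mp ht h hh, map_mul,
      Module.End.mul_apply, hv, map_smul]
  have htop := (hH.2 _ hinv).resolve_left hc
  ext v
  simpa using Module.End.mem_eigenspace_iff.mp (htop ▸ Submodule.mem_top : v ∈ _)

theorem map_eq_smul_one_of_isConj {t s : G} (hts : IsConj t s) {c : ℂ} (hc : ρ t = c • 1) :
    ρ s = c • 1 := by
  obtain ⟨σ, rfl⟩ := isConj_iff.mp hts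
  rw [map_mul, map_mul, hc, mul_smul_comm, mul_one, smul_mul_assoc, ← map_mul,
    mul_inv_cancel, map_one]

end Scalars

theorem Equiv.Perm.swap_mem_centralizer_permFixFrom {n k : ℕ} {a b : Fin n} (ha : k ≤ a)
    (hb : k ≤ b) : Equiv.swap a b ∈ Subgroup.centralizer (permFixFrom n k : Set _) := by
  rw [Subgroup.mem_centralizer_iff]
  intro σ hσ
  rw [← mul_inv_eq_iff_eq_mul, ← Equiv.swap_apply_apply, hσ a ha, hσ b hb]

section Transpositions

variable {α V : Type*} [DecidableEq α] [Fintype α] [AddCommGroup V] [Module ℂ V]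
  {ρ : Equiv.Perm α →* Module.End ℂ V}

theorem map_eq_smul_one_of_map_swap {χ : Equiv.Perm α →* ℂ}
    (h : ∀ x y : α, x ≠ y → ρ (Equiv.swap x y) = χ (Equiv.swap x y) • 1) (g : Equiv.Perm α) :
    ρ g = χ g • 1 := by
  induction g using Equiv.Perm.swap_induction_on with
  | one => simp
  | swap_mul f x y hxy ih => rw [map_mul, map_mul, ih, h x y hxy, smul_mul_smul_comm, mul_one]

theorem eq_one_or_eq_sign_smul_of_map_swap_eq_smul [Nontrivial V] {a b : α} (hab : a ≠ b)
    {c : ℂ} (hc : ρ (Equiv.swap a b) = c • 1) :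
    (∀ g, ρ g = LinearMap.id) ∨ (∀ g, ρ g = ((Equiv.Perm.sign g : ℤ) : ℂ) • LinearMap.id) := by
  have hc2 : c * c = 1 := by
    have h := congrArg ρ (Equiv.swap_mul_self a b)
    rw [map_mul, map_one, hc, smul_mul_smul_comm, mul_one] at h
    exact smul_left_injective ℂ one_ne_zero (h.trans (one_smul ℂ 1).symm)
  have hswap {x y : α} (hxy : x ≠ y) : ρ (Equiv.swap x y) = c • 1 :=
    map_eq_smul_one_of_isConj (Equiv.Perm.isConj_swap hab hxy) hc
  rcases mul_self_eq_one_iff.mp hc2 with rfl | rfl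
  · left
    intro g
    simpa [Module.End.one_eq_id] using
      map_eq_smul_one_of_map_swap (ρ := ρ) (χ := 1) (fun x y hxy => by simpa using hswap hxy) g
  · right
    intro g
    simpa [Module.End.one_eq_id] using map_eq_smul_one_of_map_swap (ρ := ρ)
      (χ := (Int.castRingHom ℂ).toMonoidHom.comp ((Units.coeHom ℤ).comp Equiv.Perm.sign))
      (fun x y hxy => by simpa [hxy] using hswap hxy) g

end Transpositions

theorem stmt_1_general (n : ℕ) (hn : 2 ≤ n) (V : Type*) [AddCommGroup V] [Module ℂ V]
    [FiniteDimensional ℂ V] (ρ : Equiv.Perm (Fin n) →* (V →ₗ[ℂ] V))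
    (hres : IsIrreducibleRep (ρ.comp (permFixFrom n (n - 2)).subtype)) :
    (∀ g : Equiv.Perm (Fin n), ρ g = LinearMap.id) ∨
      (∀ g : Equiv.Perm (Fin n),
        ρ g = (((Equiv.Perm.sign g : ℤ) : ℂ)) • (LinearMap.id : V →ₗ[ℂ] V)) := by
  set a : Fin n := ⟨n - 2, by omega⟩
  set b : Fin n := ⟨n - 1, by omega⟩
  have hab : a ≠ b := by
    rw [ne_eq, Fin.mk.injEq]
    omega
  obtain ⟨c, hc⟩ := hres.exists_eq_smul_one_of_mem_centralizer
    (Equiv.Perm.swap_mem_centralizer_permFixFrom (a := a) (b := b) le_rfl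
      (show n - 2 ≤ n - 1 by omega))
  have := hres.1
  exact eq_one_or_eq_sign_smul_of_map_swap_eq_smul hab hc

/-- If an irreducible representation of `S_n` (`n ≥ 2`) on a nonzero finite-dimensional
complex vector space restricts irreducibly to `S_{n-2}`, then it is the trivial
representation or the sign representation. -/
theorem stmt_1 (n : ℕ) (hn : 2 ≤ n) (V : Type*) [AddCommGroup V] [Module ℂ V]
    [FiniteDimensional ℂ V] (ρ : Equiv.Perm (Fin n) →* (V →ₗ[ℂ] V))
    (hρ : IsIrreducibleRep ρ)
    (hres : IsIrreducibleRep (ρ.comp (permFixFrom n (n - 2)).subtype)) :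
    (∀ g : Equiv.Perm (Fin n), ρ g = LinearMap.id) ∨
      (∀ g : Equiv.Perm (Fin n),
        ρ g = (((Equiv.Perm.sign g : ℤ) : ℂ)) • (LinearMap.id : V →ₗ[ℂ] V)) :=
  stmt_1_general n hn V ρ hres
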